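/- Let u : ℝ² → ℝ² and g : ℝ² → ℝ be C^∞ with 𝓔u(x) = g(x) · (e₁⊗e₁) for all x ∈ ℝ². Then there exist C^∞ functions h, p : ℝ → ℝ such that g(x₁, x₂) = h(x₁) + p(x₁) x₂ for all (x₁,x₂), and there exist C^∞ functions H, 𝒫 : ℝ → ℝ with 𝒫'' = p, H' = h, and a rigid deformation ω (i.e. ω(x) = u₀ + Ξx with Ξ skew-symmetric) such that u(x₁,x₂) = (H(x₁) + 𝒫'(x₁) x₂, −𝒫(x₁)) + ω(x₁,x₂) for all (x₁,x₂) ∈ ℝ². -/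

import Mathlib

/-- The symmetrized gradient `𝓔u(x) = (Du(x) + Du(x)ᵀ)/2`, where `(Du)_{ij} = ∂_j u_i`. -/
noncomputable def symGrad {d : ℕ} (u : (Fin d → ℝ) → (Fin d → ℝ)) (x : Fin d → ℝ) :
    Matrix (Fin d) (Fin d) ℝ :=
  fun i j => (fderiv ℝ u x (Pi.single j 1) i + fderiv ℝ u x (Pi.single i 1) j) / 2

private lemma deriv_smooth' {f : ℝ → ℝ} (hf : ContDiff ℝ (⊤ : ℕ∞) f) : ContDiff ℝ (⊤ : ℕ∞) (deriv f) := by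
  have : ContDiff ℝ (((⊤ : ℕ∞) : WithTop ℕ∞) + 1) f := by
    rwa [show (((⊤ : ℕ∞) : WithTop ℕ∞) + 1) = ((⊤ : ℕ∞) : WithTop ℕ∞) from rfl]
  exact (contDiff_succ_iff_deriv.mp this).2.2

private lemma lineDeriv2 (u : (Fin 2 → ℝ) → Fin 2 → ℝ) (hu : Differentiable ℝ u)
    (x e : Fin 2 → ℝ) (i : Fin 2) (t : ℝ) :
    HasDerivAt (fun s : ℝ => u (x + s • e) i) (fderiv ℝ u (x + t • e) e i) t := by
  have hl : HasDerivAt (fun s : ℝ => x + s • e) e t := by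
    simpa using ((hasDerivAt_id t).smul_const e).const_add x
  have h1 : HasFDerivAt u (fderiv ℝ u (x + t • e)) (x + t • e) := (hu _).hasFDerivAt
  have h2 := h1.comp_hasDerivAt t hl
  exact ((ContinuousLinearMap.proj i : (Fin 2 → ℝ) →L[ℝ] ℝ).hasFDerivAt.comp_hasDerivAt t h2)

private lemma integ_const {f : ℝ → ℝ} {c : ℝ} (hf : ∀ t : ℝ, HasDerivAt f c t) (t : ℝ) :
    f t = f 0 + c * t := by
  have h : ∀ s, HasDerivAt (fun s => f s - c * s) 0 s := fun s => by
    have := (hf s).sub ((hasDerivAt_id s).const_mul c); simp only [mul_one, sub_self] at this; exact this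
  have := is_const_of_deriv_eq_zero (f := fun s => f s - c * s)
    (fun s => (h s).differentiableAt) (fun s => (h s).deriv) t 0
  simp at this; linarith

private lemma shiftDeriv {f : ℝ → ℝ} (hf : DifferentiableAt ℝ f a) :
    HasDerivAt (fun s : ℝ => f (a + s)) (deriv f a) 0 := by
  have h1 : HasDerivAt (fun s : ℝ => a + s) 1 0 := by
    simpa using (hasDerivAt_id (0:ℝ)).const_add a
  have h2 : HasDerivAt f (deriv f a) (a + 0) := by simpa using hf.hasDerivAt
  have := h2.comp 0 h1; rw [mul_one] at this; exact this

/-- Rigidity for `P = e₁ ⊗ e₁` in 2D: if `𝓔u = g · (e₁ ⊗ e₁)` with `u, g` smooth, then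
`g(x₁,x₂) = h(x₁) + p(x₁) x₂`, and `u(x₁,x₂) = (H(x₁) + 𝒫'(x₁) x₂, −𝒫(x₁)) + ω(x₁,x₂)`
where `H' = h`, `𝒫'' = p` and `ω` is a rigid deformation. -/
theorem rigidity_e1_tensor_e1 (u : (Fin 2 → ℝ) → (Fin 2 → ℝ)) (g : (Fin 2 → ℝ) → ℝ)
    (hu : ContDiff ℝ (⊤ : ℕ∞) u) (hg : ContDiff ℝ (⊤ : ℕ∞) g)
    (h : ∀ x, symGrad u x = g x • Matrix.single (0 : Fin 2) (0 : Fin 2) (1 : ℝ)) :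
    ∃ h' p H P : ℝ → ℝ,
      ContDiff ℝ (⊤ : ℕ∞) h' ∧ ContDiff ℝ (⊤ : ℕ∞) p ∧ ContDiff ℝ (⊤ : ℕ∞) H ∧ ContDiff ℝ (⊤ : ℕ∞) P ∧
      (∀ x : Fin 2 → ℝ, g x = h' (x 0) + p (x 0) * x 1) ∧
      deriv H = h' ∧ deriv (deriv P) = p ∧
      ∃ (u₀ : Fin 2 → ℝ) (Ξ : Matrix (Fin 2) (Fin 2) ℝ), Ξ.transpose = -Ξ ∧
        ∀ x : Fin 2 → ℝ,
          u x = ![H (x 0) + deriv P (x 0) * x 1, -P (x 0)] + (u₀ + Ξ.mulVec x) := by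
  have hud : Differentiable ℝ u := hu.differentiable (by simp)
  have h00 : ∀ x, fderiv ℝ u x (Pi.single 0 1) 0 = g x := fun x => by
    have := congrFun (congrFun (h x) 0) 0
    simp [symGrad, Matrix.single, Matrix.smul_apply] at this
    linarith
  have h11 : ∀ x, fderiv ℝ u x (Pi.single 1 1) 1 = 0 := fun x => by
    have := congrFun (congrFun (h x) 1) 1
    simp [symGrad, Matrix.single, Matrix.smul_apply] at this
    linarith
  have h01 : ∀ x, fderiv ℝ u x (Pi.single 1 1) 0 = -(fderiv ℝ u x (Pi.single 0 1) 1) := fun x => by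
    have := congrFun (congrFun (h x) 0) 1
    simp [symGrad, Matrix.single, Matrix.smul_apply] at this
    linarith
  set φ : ℝ → ℝ := fun t => u ![t, 0] 1 with hφdef
  set ψ : ℝ → ℝ := fun t => u ![t, 0] 0 with hψdef
  -- smoothness of the line embedding
  have hlsm : ContDiff ℝ (⊤ : ℕ∞) (fun t : ℝ => (![t, 0] : Fin 2 → ℝ)) := by
    apply contDiff_pi.2
    intro i
    fin_cases i
    · exact contDiff_id
    · simpa using (contDiff_const : ContDiff ℝ (⊤ : ℕ∞) (fun _ : ℝ => (0:ℝ)))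
  have hφsm : ContDiff ℝ (⊤ : ℕ∞) φ := (contDiff_pi.1 hu 1).comp hlsm
  have hψsm : ContDiff ℝ (⊤ : ℕ∞) ψ := (contDiff_pi.1 hu 0).comp hlsm
  have hφd : Differentiable ℝ φ := hφsm.differentiable (by simp)
  have hψd : Differentiable ℝ ψ := hψsm.differentiable (by simp)
  have hdφsm : ContDiff ℝ (⊤ : ℕ∞) (deriv φ) := deriv_smooth' hφsm
  have hdφd : Differentiable ℝ (deriv φ) := hdφsm.differentiable (by simp)
  have hdψsm : ContDiff ℝ (⊤ : ℕ∞) (deriv ψ) := deriv_smooth' hψsm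
  -- coordinates of line points
  have hline : ∀ a b : ℝ, (![a, 0] : Fin 2 → ℝ) + b • (Pi.single 1 1 : Fin 2 → ℝ) = ![a, b] := by
    intro a b; funext i; fin_cases i <;> simp
  have hxeq : ∀ x : Fin 2 → ℝ, (![x 0, x 1] : Fin 2 → ℝ) = x := fun x => by
    funext i; fin_cases i <;> simp
  -- Step 1: u₂ depends only on x₁
  have step1 : ∀ y : Fin 2 → ℝ, u y 1 = φ (y 0) := by
    intro y
    have hD : ∀ t : ℝ, HasDerivAt (fun s : ℝ => u (![y 0, 0] + s • (Pi.single 1 1 : Fin 2 → ℝ)) 1) 0 t := by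
      intro t
      have := lineDeriv2 u hud ![y 0, 0] (Pi.single 1 1) 1 t
      rwa [h11] at this
    have := integ_const hD (y 1)
    simp only [hline, hxeq, zero_mul, add_zero] at this
    simpa [hφdef] using this
  -- Step 2: ∂₁ u₂ = φ' everywhere
  have step2 : ∀ x : Fin 2 → ℝ, fderiv ℝ u x (Pi.single 0 1) 1 = deriv φ (x 0) := by
    intro x
    have hL : HasDerivAt (fun s : ℝ => u (x + s • (Pi.single 0 1 : Fin 2 → ℝ)) 1) (fderiv ℝ u x (Pi.single 0 1) 1) 0 := by
      have := lineDeriv2 u hud x (Pi.single 0 1) 1 0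
      simpa using this
    have hEq : (fun s : ℝ => u (x + s • (Pi.single 0 1 : Fin 2 → ℝ)) 1) = fun s : ℝ => φ (x 0 + s) := by
      funext s
      rw [step1]
      simp
    rw [hEq] at hL
    exact hL.unique (shiftDeriv (hφd (x 0)))
  -- Step 3: u₁(x) = ψ(x₁) - φ'(x₁) x₂
  have step3 : ∀ y : Fin 2 → ℝ, u y 0 = ψ (y 0) - deriv φ (y 0) * y 1 := by
    intro y
    have hD : ∀ t : ℝ, HasDerivAt (fun s : ℝ => u (![y 0, 0] + s • (Pi.single 1 1 : Fin 2 → ℝ)) 0)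
        (-(deriv φ (y 0))) t := by
      intro t
      have hl := lineDeriv2 u hud ![y 0, 0] (Pi.single 1 1) 0 t
      rw [h01, step2] at hl
      simpa [hline] using hl
    have := integ_const hD (y 1)
    simp only [hline, hxeq] at this
    simp only [hφdef, hψdef] at this ⊢
    linarith
  -- Step 4: g(x) = ψ'(x₁) - φ''(x₁) x₂
  have step4 : ∀ x : Fin 2 → ℝ, g x = deriv ψ (x 0) - deriv (deriv φ) (x 0) * x 1 := by
    intro x
    have hL : HasDerivAt (fun s : ℝ => u (x + s • (Pi.single 0 1 : Fin 2 → ℝ)) 0) (g x) 0 := by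
      have := lineDeriv2 u hud x (Pi.single 0 1) 0 0
      rw [show x + (0:ℝ) • (Pi.single 0 1 : Fin 2 → ℝ) = x by simp, h00] at this
      exact this
    have hEq : (fun s : ℝ => u (x + s • (Pi.single 0 1 : Fin 2 → ℝ)) 0)
        = fun s : ℝ => ψ (x 0 + s) - deriv φ (x 0 + s) * x 1 := by
      funext s
      rw [step3]
      simp
    rw [hEq] at hL
    have hR : HasDerivAt (fun s : ℝ => ψ (x 0 + s) - deriv φ (x 0 + s) * x 1)
        (deriv ψ (x 0) - deriv (deriv φ) (x 0) * x 1) 0 :=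
      (shiftDeriv (hψd (x 0))).sub ((shiftDeriv (hdφd (x 0))).mul_const (x 1))
    exact hL.unique hR
  -- assemble the answer
  refine ⟨deriv ψ, fun t => -(deriv (deriv φ) t), ψ,
    fun t => -φ t + φ 0 + deriv φ 0 * t, hdψsm, (deriv_smooth' hdφsm).neg,
    hψsm, ((hφsm.neg.add contDiff_const).add (contDiff_const.mul contDiff_id)), ?_, rfl, ?_, ?_⟩
  · intro x; rw [step4]; ring
  · -- deriv (deriv P) = p
    have hP' : deriv (fun t => -φ t + φ 0 + deriv φ 0 * t)
        = fun t => -(deriv φ t) + deriv φ 0 := by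
      funext t
      have : HasDerivAt (fun t => -φ t + φ 0 + deriv φ 0 * t)
          (-(deriv φ t) + 0 + deriv φ 0 * 1) t :=
        (((hφd t).hasDerivAt.neg).add (hasDerivAt_const t (φ 0))).add
          ((hasDerivAt_id t).const_mul (deriv φ 0))
      simpa using this.deriv
    rw [hP']
    funext t
    have : HasDerivAt (fun t => -(deriv φ t) + deriv φ 0)
        (-(deriv (deriv φ) t) + 0) t :=
      ((hdφd t).hasDerivAt.neg).add (hasDerivAt_const t (deriv φ 0))
    simpa using this.deriv
  · refine ⟨![0, φ 0], Matrix.of ![![0, -(deriv φ 0)], ![deriv φ 0, 0]], ?_, ?_⟩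
    · ext i j
      fin_cases i <;> fin_cases j <;>
        simp [Matrix.transpose_apply]
    · intro x
      have hP' : deriv (fun t => -φ t + φ 0 + deriv φ 0 * t)
          = fun t => -(deriv φ t) + deriv φ 0 := by
        funext t
        have : HasDerivAt (fun t => -φ t + φ 0 + deriv φ 0 * t)
            (-(deriv φ t) + 0 + deriv φ 0 * 1) t :=
          (((hφd t).hasDerivAt.neg).add (hasDerivAt_const t (φ 0))).add
            ((hasDerivAt_id t).const_mul (deriv φ 0))
        simpa using this.deriv
      funext i
      fin_cases i
      · have h3 := step3 x
        simp only [hP', Pi.add_apply]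
        simp [Matrix.mulVec, dotProduct, Fin.sum_univ_two]
        rw [h3]; ring
      · have h1 := step1 x
        simp only [Pi.add_apply]
        simp [Matrix.mulVec, dotProduct, Fin.sum_univ_two]
        rw [h1]; ring
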